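/- arXiv:2204.13559 — 3 statements merged into one kernel-verified Lean document; each statement's English description precedes it below -/
import Mathlib

section
/- Let α ∈ (0,1], a > 0, b ≥ 0, and d ≥ 1 an integer. Then there exists a constant C > 0 such that for all ε ∈ (0,1): 1 + (1/Γ((d+2)/2)) · ∫_0^∞ t^{(d+2)/2 − 1} · exp(ε(b − a t^α)) dt ≤ C (1 + ε^{−(d+2)/(2α)}). -/
open Set Real MeasureTheory

/-- For `α ∈ (0,1]`, `a > 0`, `b ≥ 0`, `d ≥ 1` there is `C > 0` with
`1 + Γ((d+2)/2)⁻¹ ∫₀^∞ t^{(d+2)/2−1} e^{ε(b − a t^α)} dt ≤ C (1 + ε^{−(d+2)/(2α)})`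
for all `ε ∈ (0,1)`. -/
theorem stmt_2 (α a b : ℝ) (d : ℕ)
    (hα : α ∈ Set.Ioc (0:ℝ) 1) (ha : 0 < a) (hb : 0 ≤ b) (hd : 1 ≤ d) :
    ∃ C : ℝ, 0 < C ∧ ∀ ε ∈ Set.Ioo (0:ℝ) 1,
      1 + (1 / Real.Gamma (((d : ℝ) + 2) / 2)) *
        ∫ t in Set.Ioi (0:ℝ), t ^ (((d : ℝ) + 2) / 2 - 1) * Real.exp (ε * (b - a * t ^ α))
      ≤ C * (1 + ε ^ (-(((d : ℝ) + 2) / (2 * α)))) := by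
  obtain ⟨hα0, hα1⟩ := hα
  set p : ℝ := ((d : ℝ) + 2) / 2 with hp_def
  have hp : 0 < p := by positivity
  have hΓp : 0 < Real.Gamma p := Real.Gamma_pos_of_pos hp
  have hΓpα : 0 < Real.Gamma (p / α) := Real.Gamma_pos_of_pos (by positivity)
  set K : ℝ := (1 / Real.Gamma p) * (Real.exp b * (a ^ (-p / α) * (1 / α) *
    Real.Gamma (p / α))) with hK_def
  have hK : 0 < K := by
    apply mul_pos (by positivity)
    apply mul_pos (Real.exp_pos b)
    positivity
  refine ⟨1 + K, by linarith, ?_⟩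
  rintro ε ⟨hε0, hε1⟩
  have hkey : ∫ t in Set.Ioi (0:ℝ), t ^ (p - 1) * Real.exp (ε * (b - a * t ^ α))
      = Real.exp (ε * b) * ((ε * a) ^ (-p / α) * (1 / α) * Real.Gamma (p / α)) := by
    have h1 : ∀ t : ℝ, t ^ (p - 1) * Real.exp (ε * (b - a * t ^ α))
        = Real.exp (ε * b) * (t ^ (p - 1) * Real.exp (-(ε * a) * t ^ α)) := by
      intro t
      rw [show ε * (b - a * t ^ α) = ε * b + (-(ε * a) * t ^ α) by ring, Real.exp_add]
      ring
    simp_rw [h1]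
    rw [integral_const_mul,
      integral_rpow_mul_exp_neg_mul_rpow hα0 (by linarith : (-1:ℝ) < p - 1)
        (by positivity : 0 < ε * a)]
    ring_nf
  rw [hkey]
  have hεpow : (ε * a) ^ (-p / α) = ε ^ (-p / α) * a ^ (-p / α) :=
    Real.mul_rpow hε0.le ha.le
  have hexp : Real.exp (ε * b) ≤ Real.exp b :=
    Real.exp_le_exp.mpr (by nlinarith)
  have hεp : (0:ℝ) < ε ^ (-p / α) := Real.rpow_pos_of_pos hε0 _
  have hbound : (1 / Real.Gamma p) *
      (Real.exp (ε * b) * ((ε * a) ^ (-p / α) * (1 / α) * Real.Gamma (p / α)))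
      ≤ K * ε ^ (-p / α) := by
    rw [hεpow, hK_def]
    have h2 : Real.exp (ε * b) * (ε ^ (-p / α) * a ^ (-p / α) * (1 / α) * Real.Gamma (p / α))
        ≤ Real.exp b * (ε ^ (-p / α) * a ^ (-p / α) * (1 / α) * Real.Gamma (p / α)) := by
      apply mul_le_mul_of_nonneg_right hexp
      positivity
    calc (1 / Real.Gamma p) *
        (Real.exp (ε * b) * (ε ^ (-p / α) * a ^ (-p / α) * (1 / α) * Real.Gamma (p / α)))
        ≤ (1 / Real.Gamma p) *
        (Real.exp b * (ε ^ (-p / α) * a ^ (-p / α) * (1 / α) * Real.Gamma (p / α))) := by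
          apply mul_le_mul_of_nonneg_left h2 (by positivity)
      _ = 1 / Real.Gamma p * (Real.exp b * (a ^ (-p / α) * (1 / α) * Real.Gamma (p / α))) *
          ε ^ (-p / α) := by ring
  have hexpeq : -(((d : ℝ) + 2) / (2 * α)) = -p / α := by
    rw [hp_def]; field_simp
  rw [hexpeq]
  nlinarith [hεp, hK, mul_le_mul_of_nonneg_right (le_of_lt hK) hεp.le]
end

section
/- Let (S_t)_{t≥0} be a subordinator with Laplace exponent B (i.e. E[e^{−λ S_t}] = e^{−t B(λ)} for all λ, t ≥ 0), where B is a Bernstein function satisfying B(r) ≥ a r^α − b for constants a>0, b≥0, α ∈ (0,1]. Then for every p > form 0 there is a constant c > 0 with E[(min(1, S_ε))^{−p}] ≤ c (1 + ε^{−p/α}) for all ε ∈ (0,1), using the identity E[S_ε^{−p}] = (1/Γ(p)) ∫_0^∞ t^{p−1} e^{−ε B(t)} dt. -/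
/-!
Since `min 1 s ^ (-p) ≤ 1 + s ^ (-p)`, it suffices to bound `E[S_ε ^ (-p)]`, which the
Gamma-integral identity expresses through `∫ t ^ (p - 1) e^{-ε B(t)} dt`. The lower bound on `B`
dominates the integrand by `e^b t ^ (p - 1) e^{-ε a t ^ α}`, whose integral is the Gamma-type
integral `(ε a) ^ (-p / α) Γ(p / α) / α`.
-/

open Set Real MeasureTheory

lemma min_one_rpow_neg_le_one_add {s : ℝ} (hs : 0 ≤ s) (p : ℝ) :
    min 1 s ^ (-p) ≤ 1 + s ^ (-p) := by
  rcases le_total 1 s with h | h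
  · rw [min_eq_left h, one_rpow]
    linarith [rpow_nonneg hs (-p)]
  · rw [min_eq_right h]
    linarith

lemma rpow_neg_le_one_add_min_one {s p : ℝ} (hs : 0 ≤ s) (hp : 0 ≤ p) :
    s ^ (-p) ≤ 1 + min 1 s ^ (-p) := by
  rcases le_total 1 s with h | h
  · linarith [rpow_le_one_of_one_le_of_nonpos h (neg_nonpos.2 hp),
      rpow_nonneg (le_min zero_le_one hs) (-p)]
  · rw [min_eq_right h]
    linarith

section Probability

variable {Ω : Type*} [MeasurableSpace Ω] {μ : Measure Ω} {X : Ω → ℝ}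

lemma aemeasurable_of_integral_exp_neg_ne_zero (h : ∫ ω, exp (-X ω) ∂μ ≠ 0) :
    AEMeasurable X μ := by
  have hexp : AEMeasurable (fun ω => exp (-X ω)) μ :=
    (Integrable.of_integral_ne_zero h).aestronglyMeasurable.aemeasurable
  simpa only [Function.comp_def, Pi.neg_def, log_exp, neg_neg] using
    (measurable_log.comp_aemeasurable hexp).neg

lemma integral_min_one_rpow_neg_le [IsProbabilityMeasure μ] {p : ℝ} (hp : 0 ≤ p)
    (hX : AEMeasurable X μ) (hX0 : ∀ ω, 0 ≤ X ω) :
    ∫ ω, min 1 (X ω) ^ (-p) ∂μ ≤ 1 + ∫ ω, X ω ^ (-p) ∂μ := by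
  have hXp_nonneg : 0 ≤ ∫ ω, X ω ^ (-p) ∂μ :=
    integral_nonneg fun ω => rpow_nonneg (hX0 ω) _
  by_cases hmin : Integrable (fun ω => min 1 (X ω) ^ (-p)) μ
  swap
  · rw [integral_undef hmin]
    linarith
  have hXp : Integrable (fun ω => X ω ^ (-p)) μ := by
    refine ((integrable_const 1).add hmin).mono' (hX.pow_const _).aestronglyMeasurable
      (ae_of_all _ fun ω => ?_)
    rw [norm_of_nonneg (rpow_nonneg (hX0 ω) _)]
    exact rpow_neg_le_one_add_min_one (hX0 ω) hp
  calc ∫ ω, min 1 (X ω) ^ (-p) ∂μ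
      ≤ ∫ ω, (1 + X ω ^ (-p)) ∂μ :=
        integral_mono hmin ((integrable_const 1).add hXp)
          fun ω => min_one_rpow_neg_le_one_add (hX0 ω) p
    _ = 1 + ∫ ω, X ω ^ (-p) ∂μ := by
        rw [integral_add (integrable_const 1) hXp, integral_const, probReal_univ, one_smul]

end Probability

lemma exp_neg_mul_le_exp_mul_exp_neg_mul_rpow {B : ℝ → ℝ} {a b α ε t : ℝ} (hb : 0 ≤ b)
    (hε0 : 0 ≤ ε) (hε1 : ε ≤ 1) (hBt : a * t ^ α - b ≤ B t) :
    exp (-ε * B t) ≤ exp b * exp (-(ε * a) * t ^ α) := by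
  rw [← exp_add, exp_le_exp]
  nlinarith [mul_le_mul_of_nonneg_left hBt hε0, mul_le_of_le_one_left hb hε1]

lemma setIntegral_rpow_mul_exp_neg_mul_le {B : ℝ → ℝ} {a b α p ε : ℝ} (ha : 0 < a) (hb : 0 ≤ b)
    (hα : 0 < α) (hp : 0 < p) (hε0 : 0 < ε) (hε1 : ε ≤ 1)
    (hBlb : ∀ r : ℝ, 0 ≤ r → a * r ^ α - b ≤ B r) :
    ∫ t in Ioi (0 : ℝ), t ^ (p - 1) * exp (-ε * B t) ≤
      exp b * (a ^ (-(p / α)) * (1 / α) * Gamma (p / α)) * ε ^ (-(p / α)) := by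
  have hεa : 0 < ε * a := mul_pos hε0 ha
  have hdom : IntegrableOn (fun t => exp b * (t ^ (p - 1) * exp (-(ε * a) * t ^ α))) (Ioi 0) :=
    (integrableOn_rpow_mul_exp_neg_mul_rpow (by linarith) hα hεa).const_mul _
  have hgamma : ∫ t in Ioi (0 : ℝ), t ^ (p - 1) * exp (-(ε * a) * t ^ α) =
      (ε * a) ^ (-(p / α)) * (1 / α) * Gamma (p / α) := by
    simpa only [sub_add_cancel, neg_div] using
      integral_rpow_mul_exp_neg_mul_rpow (q := p - 1) hα (by linarith) hεa
  calc ∫ t in Ioi (0 : ℝ), t ^ (p - 1) * exp (-ε * B t)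
      ≤ ∫ t in Ioi (0 : ℝ), exp b * (t ^ (p - 1) * exp (-(ε * a) * t ^ α)) := by
        refine integral_mono_of_nonneg ?_ hdom ?_ <;>
          filter_upwards [ae_restrict_mem measurableSet_Ioi] with t (ht : 0 < t)
        · positivity
        · rw [mul_left_comm]
          exact mul_le_mul_of_nonneg_left
            (exp_neg_mul_le_exp_mul_exp_neg_mul_rpow hb hε0.le hε1 (hBlb t ht.le))
            (rpow_nonneg ht.le _)
    _ = exp b * (a ^ (-(p / α)) * (1 / α) * Gamma (p / α)) * ε ^ (-(p / α)) := by
        rw [integral_const_mul, hgamma, mul_rpow hε0.le ha.le]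
        ring

/-- If `S_ε` has Laplace transform `e^{−ε B(λ)}` with
`B(r) ≥ a r^α − b`, then for every `p > 0` there is `c > 0` with
`E[(min(1, S_ε))^{−p}] ≤ c (1 + ε^{−p/α})` for all `ε ∈ (0,1)`. -/
theorem stmt_3 {Ω : Type*} [MeasurableSpace Ω] (μ : Measure Ω) [IsProbabilityMeasure μ]
    (B : ℝ → ℝ) (S : ℝ → Ω → ℝ) (a b α p : ℝ)
    (ha : 0 < a) (hb : 0 ≤ b) (hα : α ∈ Set.Ioc (0:ℝ) 1) (hp : 0 < p)
    (hBlb : ∀ r : ℝ, 0 ≤ r → a * r ^ α - b ≤ B r)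
    (hSnonneg : ∀ ε ∈ Set.Ioo (0:ℝ) 1, ∀ ω, 0 ≤ S ε ω)
    (hLaplace : ∀ ε ∈ Set.Ioo (0:ℝ) 1, ∀ l : ℝ, 0 ≤ l →
      ∫ ω, Real.exp (-l * S ε ω) ∂μ = Real.exp (-ε * B l))
    (hIdentity : ∀ ε ∈ Set.Ioo (0:ℝ) 1,
      ∫ ω, (S ε ω) ^ (-p) ∂μ =
        (1 / Real.Gamma p) * ∫ t in Set.Ioi (0:ℝ), t ^ (p - 1) * Real.exp (-ε * B t)) :
    ∃ c : ℝ, 0 < c ∧ ∀ ε ∈ Set.Ioo (0:ℝ) 1,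
      ∫ ω, (min 1 (S ε ω)) ^ (-p) ∂μ ≤ c * (1 + ε ^ (-(p / α))) := by
  obtain ⟨hα0, -⟩ := hα
  set D := exp b * (a ^ (-(p / α)) * (1 / α) * Gamma (p / α)) / Gamma p
  have hD : 0 < D := by
    have := Gamma_pos_of_pos (div_pos hp hα0)
    have := Gamma_pos_of_pos hp
    positivity
  refine ⟨1 + D, by linarith, fun ε hε => ?_⟩
  have hS : AEMeasurable (S ε) μ := aemeasurable_of_integral_exp_neg_ne_zero <| by
    simpa only [neg_one_mul] using (hLaplace ε hε 1 zero_le_one).trans_ne (exp_pos _).ne'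
  have hεp : 0 ≤ ε ^ (-(p / α)) := rpow_nonneg hε.1.le _
  calc ∫ ω, min 1 (S ε ω) ^ (-p) ∂μ
      ≤ 1 + ∫ ω, S ε ω ^ (-p) ∂μ := integral_min_one_rpow_neg_le hp.le hS (hSnonneg ε hε)
    _ ≤ 1 + D * ε ^ (-(p / α)) := by
        rw [hIdentity ε hε, one_div_mul_eq_div, div_mul_eq_mul_div]
        gcongr
        exact setIntegral_rpow_mul_exp_neg_mul_le ha hb hα0 hp hε.1 hε.2.le hBlb
    _ ≤ (1 + D) * (1 + ε ^ (-(p / α))) := by nlinarith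
end

section
/- Let α₀ > 1, d ≥ 1, α ∈ (0,1]. If λ_k satisfies α₀^{−1} k^{2/d} ≤ λ_k for all k ≥ 1, and B(λ) ≥ c λ^α for some c > 0, then the series ∑_{k≥1} k^{(d+1)/d} / B(λ_k) · exp(−α₀^{−1} k^{2/d} t^{−β}) is bounded above by C t^{((2d−2α+1)/2)β} for all t ≥ 1, for some constant C > 0 (with β > 0 fixed). -/
open Set Real

lemma lem_poly_exp (s : ℝ) (hs : 0 ≤ s) :
    ∃ K : ℝ, 0 < K ∧ ∀ y : ℝ, 0 ≤ y → y ^ s * Real.exp (-y) ≤ K := by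
  set n := ⌈s⌉₊ with hn
  refine ⟨(n.factorial : ℝ) * 2 ^ n + 1, by positivity, fun y hy => ?_⟩
  rcases le_or_gt y 1 with h1 | h1
  · have h2 : y ^ s ≤ 1 := Real.rpow_le_one hy h1 hs
    have h3 : Real.exp (-y) ≤ 1 := Real.exp_le_one_iff.2 (by linarith)
    nlinarith [Real.exp_pos (-y), Real.rpow_nonneg hy s, Nat.factorial_pos n,
      pow_pos (two_pos (α := ℝ)) n, mul_pos (Nat.cast_pos.2 (Nat.factorial_pos n)) (pow_pos (two_pos (α := ℝ)) n)]
  · have h2 : y ^ s ≤ y ^ (n : ℝ) :=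
      Real.rpow_le_rpow_of_exponent_le h1.le (Nat.le_ceil s)
    rw [Real.rpow_natCast] at h2
    -- (y/2)^n / n! ≤ exp (y/2)
    have h3 : (y/2) ^ n / (n.factorial : ℝ) ≤ Real.exp (y/2) := by
      have := Real.sum_le_exp_of_nonneg (x := y/2) (by linarith) (n+1)
      calc (y/2) ^ n / (n.factorial : ℝ)
          ≤ ∑ i ∈ Finset.range (n+1), (y/2) ^ i / (i.factorial : ℝ) := by
            refine Finset.single_le_sum (f := fun i => (y/2)^i / (i.factorial : ℝ)) ?_ (Finset.self_mem_range_succ n)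
            intro i _
            positivity
        _ ≤ Real.exp (y/2) := this
    have h4 : y ^ n ≤ (n.factorial : ℝ) * 2 ^ n * Real.exp (y/2) := by
      have hy2 : y ^ n = 2 ^ n * (y/2) ^ n := by
        rw [← mul_pow]; ring_nf
      rw [hy2]
      have : (y/2)^n ≤ (n.factorial : ℝ) * Real.exp (y/2) := by
        rw [div_le_iff₀ (by positivity)] at h3
        linarith [h3]
      nlinarith [pow_pos (two_pos (α := ℝ)) n]
    have h5 : y ^ s * Real.exp (-y) ≤ (n.factorial : ℝ) * 2 ^ n * Real.exp (y/2) * Real.exp (-y) := by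
      have := Real.exp_pos (-y)
      nlinarith
    have h6 : Real.exp (y/2) * Real.exp (-y) = Real.exp (-(y/2)) := by
      rw [← Real.exp_add]; ring_nf
    have h7 : Real.exp (-(y/2)) ≤ 1 := Real.exp_le_one_iff.2 (by linarith)
    have h8 : (0:ℝ) < (n.factorial : ℝ) * 2 ^ n := by positivity
    calc y ^ s * Real.exp (-y) ≤ (n.factorial : ℝ) * 2 ^ n * (Real.exp (y/2) * Real.exp (-y)) := by linarith [h5, mul_assoc ((n.factorial : ℝ) * 2^n) (Real.exp (y/2)) (Real.exp (-y))]
      _ = (n.factorial : ℝ) * 2 ^ n * Real.exp (-(y/2)) := by rw [h6]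
      _ ≤ (n.factorial : ℝ) * 2 ^ n * 1 := by nlinarith
      _ ≤ (n.factorial : ℝ) * 2 ^ n + 1 := by linarith

lemma lem_tail_summable (N : ℕ) : Summable (fun k : ℕ => (1:ℝ) / (((k:ℝ) + N) + 1)^2) := by
  have h : Summable (fun m : ℕ => (1:ℝ) / (m:ℝ)^(2:ℝ)) :=
    Real.summable_one_div_nat_rpow.2 one_lt_two
  have h2 := (summable_nat_add_iff (N+1)).2 h
  refine h2.congr fun k => ?_
  push_cast
  rw [Real.rpow_two]
  ring_nf

lemma lem_tail (N : ℕ) (hN : 1 ≤ N) :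
    ∑' k : ℕ, (1:ℝ) / (((k:ℝ) + N) + 1)^2 ≤ (1:ℝ) / (N:ℝ) := by
  have hN0 : (0:ℝ) < N := by exact_mod_cast hN
  refine Summable.tsum_le_of_sum_range_le (lem_tail_summable N) fun n => ?_
  have key : ∀ k : ℕ, (1:ℝ) / (((k:ℝ) + N) + 1)^2 ≤
      (fun i : ℕ => 1 / ((i:ℝ) + N)) k - (fun i : ℕ => 1 / ((i:ℝ) + N)) (k+1) := by
    intro k
    simp only
    have hx : (0:ℝ) < (k:ℝ) + N := by positivity
    have hx1 : (0:ℝ) < (k:ℝ) + N + 1 := by positivity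
    have e1 : 1 / ((k:ℝ) + N) - 1 / (((k:ℝ)+1) + N) = 1 / (((k:ℝ)+N) * ((k:ℝ)+N+1)) := by
      rw [div_sub_div _ _ (ne_of_gt hx) (by positivity)]
      congr 1 <;> ring
    push_cast
    rw [e1]
    apply one_div_le_one_div_of_le (by positivity)
    nlinarith
  calc ∑ k ∈ Finset.range n, (1:ℝ) / (((k:ℝ) + N) + 1)^2
      ≤ ∑ k ∈ Finset.range n, ((fun i : ℕ => 1 / ((i:ℝ) + N)) k - (fun i : ℕ => 1 / ((i:ℝ) + N)) (k+1)) :=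
        Finset.sum_le_sum fun k _ => key k
    _ = 1 / ((0:ℝ) + N) - 1 / ((n:ℝ) + N) := by
        rw [Finset.sum_range_sub' (fun i : ℕ => 1 / ((i:ℝ) + N)) n]
        norm_num
    _ ≤ (1:ℝ) / (N:ℝ) := by
        have : (0:ℝ) ≤ 1 / ((n:ℝ) + N) := by positivity
        simp only [zero_add]
        linarith

lemma lem_gauss_sum (b : ℝ) (hb : 0 < b) (d : ℕ) (hd : 1 ≤ d) :
    ∃ K : ℝ, 0 < K ∧ ∀ u : ℝ, 0 < u → u ≤ 1 →
      Summable (fun k : ℕ => Real.exp (-(b * ((k:ℝ)+1) ^ (2/(d:ℝ)) * u))) ∧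
      ∑' k : ℕ, Real.exp (-(b * ((k:ℝ)+1) ^ (2/(d:ℝ)) * u)) ≤ K * u ^ (-((d:ℝ)/2)) := by
  obtain ⟨C, hC, hCb⟩ := lem_poly_exp (d:ℝ) (by positivity)
  have hbd : (0:ℝ) < b ^ d := pow_pos hb d
  refine ⟨2 * Real.sqrt (C / b ^ d) + 2, by positivity, fun u hu hu1 => ?_⟩
  have hd0 : (d:ℝ) ≠ 0 := by positivity
  set f : ℕ → ℝ := fun k => Real.exp (-(b * ((k:ℝ)+1) ^ (2/(d:ℝ)) * u)) with hf
  set M : ℝ := C / (b ^ d * u ^ d) with hM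
  have hM0 : 0 < M := by positivity
  -- pointwise bound
  have key : ∀ k : ℕ, f k ≤ M * (1 / (((k:ℝ)+1)^2)) := by
    intro k
    have hk1 : (0:ℝ) < (k:ℝ) + 1 := by positivity
    have hw : (0:ℝ) < ((k:ℝ)+1) ^ (2/(d:ℝ)) := Real.rpow_pos_of_pos hk1 _
    set x : ℝ := b * ((k:ℝ)+1) ^ (2/(d:ℝ)) * u with hx
    have hx0 : 0 < x := by positivity
    have h1 : x ^ (d:ℝ) * Real.exp (-x) ≤ C := hCb x hx0.le
    rw [Real.rpow_natCast] at h1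
    have hxd : x ^ d = b ^ d * u ^ d * ((k:ℝ)+1)^2 := by
      have h2 : (((k:ℝ)+1) ^ (2/(d:ℝ))) ^ d = ((k:ℝ)+1)^2 := by
        rw [← Real.rpow_natCast (((k:ℝ)+1) ^ (2/(d:ℝ))) d, ← Real.rpow_mul hk1.le,
          div_mul_cancel₀ _ hd0, Real.rpow_two]
      rw [hx, mul_pow, mul_pow, h2]
      ring
    have hxd0 : 0 < x ^ d := pow_pos hx0 d
    have : Real.exp (-x) ≤ C / x ^ d := by
      rw [le_div_iff₀ hxd0]
      linarith [h1]
    calc f k = Real.exp (-x) := rfl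
      _ ≤ C / x ^ d := this
      _ = M * (1 / (((k:ℝ)+1)^2)) := by
          rw [hxd, hM]
          field_simp
  have hfnn : ∀ k, 0 ≤ f k := fun k => (Real.exp_pos _).le
  have hgsum : Summable (fun k : ℕ => M * (1 / (((k:ℝ)+1)^2))) := by
    have := (lem_tail_summable 0).mul_left M
    refine this.congr fun k => ?_
    norm_num
  have hfsum : Summable f := Summable.of_nonneg_of_le hfnn key hgsum
  refine ⟨hfsum, ?_⟩
  set N : ℕ := ⌈Real.sqrt M⌉₊ + 1 with hN
  have hN1 : 1 ≤ N := Nat.le_add_left 1 _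
  have hNr : Real.sqrt M ≤ (N:ℝ) := by
    have := Nat.le_ceil (Real.sqrt M)
    push_cast [hN]
    linarith
  have hNr2 : (N:ℝ) ≤ Real.sqrt M + 2 := by
    have := Nat.ceil_lt_add_one (Real.sqrt_nonneg M)
    push_cast [hN]
    linarith
  have hsqM : 0 < Real.sqrt M := Real.sqrt_pos.2 hM0
  have hNr0 : (0:ℝ) < N := by exact_mod_cast hN1
  -- split
  have hsplit := Summable.sum_add_tsum_nat_add N hfsum
  have hhead : ∑ k ∈ Finset.range N, f k ≤ (N:ℝ) := by
    calc ∑ k ∈ Finset.range N, f k ≤ ∑ k ∈ Finset.range N, 1 := by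
          refine Finset.sum_le_sum fun k _ => ?_
          exact Real.exp_le_one_iff.2 (neg_nonpos.2 (by positivity))
      _ = (N:ℝ) := by simp
  have htail : ∑' k : ℕ, f (k + N) ≤ M / N := by
    have h1 : ∑' k : ℕ, f (k + N) ≤ ∑' k : ℕ, M * (1 / (((k:ℝ) + N) + 1)^2) := by
      refine Summable.tsum_le_tsum (fun k => ?_) ((summable_nat_add_iff N).2 hfsum)
        ((lem_tail_summable N).mul_left M)
      have := key (k + N)
      push_cast at this ⊢
      convert this using 4
    have h2 : ∑' k : ℕ, M * (1 / (((k:ℝ) + N) + 1)^2) = M * ∑' k : ℕ, (1:ℝ) / (((k:ℝ) + N) + 1)^2 :=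
      tsum_mul_left
    rw [h2] at h1
    calc ∑' k : ℕ, f (k + N) ≤ M * ∑' k : ℕ, (1:ℝ) / (((k:ℝ) + N) + 1)^2 := h1
      _ ≤ M * (1 / N) := mul_le_mul_of_nonneg_left (lem_tail N hN1) hM0.le
      _ = M / N := by ring
  have hMN : M / N ≤ Real.sqrt M := by
    rw [div_le_iff₀ hNr0]
    calc M = Real.sqrt M * Real.sqrt M := (Real.mul_self_sqrt hM0.le).symm
      _ ≤ Real.sqrt M * N := mul_le_mul_of_nonneg_left hNr hsqM.le
  have hbound : ∑' k, f k ≤ 2 * Real.sqrt M + 2 := by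
    rw [← hsplit]
    linarith
  -- now convert sqrt M to u-power
  have hud : (0:ℝ) < u ^ d := pow_pos hu d
  have hMsplit : M = (C / b ^ d) * (1 / u ^ d) := by rw [hM]; ring
  have hsq : Real.sqrt M = Real.sqrt (C / b ^ d) * Real.sqrt (1 / u ^ d) := by
    rw [hMsplit, Real.sqrt_mul (by positivity)]
  have hsqu : Real.sqrt (1 / u ^ d) = u ^ (-((d:ℝ)/2)) := by
    have h1 : (1:ℝ) / u ^ d = u ^ (-(d:ℝ)) := by
      rw [Real.rpow_neg hu.le, Real.rpow_natCast]
      ring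
    rw [h1, Real.sqrt_eq_rpow, ← Real.rpow_mul hu.le]
    congr 1
    ring
  have hupow1 : 1 ≤ u ^ (-((d:ℝ)/2)) := by
    apply Real.one_le_rpow_of_pos_of_le_one_of_nonpos hu hu1
    have : (0:ℝ) < (d:ℝ) := by positivity
    linarith [div_pos this (two_pos (α := ℝ))]
  calc ∑' k, f k ≤ 2 * Real.sqrt M + 2 := hbound
    _ = 2 * Real.sqrt (C / b ^ d) * u ^ (-((d:ℝ)/2)) + 2 := by rw [hsq, hsqu]; ring
    _ ≤ 2 * Real.sqrt (C / b ^ d) * u ^ (-((d:ℝ)/2)) + 2 * u ^ (-((d:ℝ)/2)) := by linarith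
    _ = (2 * Real.sqrt (C / b ^ d) + 2) * u ^ (-((d:ℝ)/2)) := by ring

/-- If `λ_k ≥ α₀⁻¹ k^{2/d}` and `B(λ) ≥ c λ^α`, then
`∑_{k≥1} k^{(d+1)/d} / B(λ_k) · e^{−α₀⁻¹ k^{2/d} t^{−β}} ≤ C t^{((2d−2α+1)/2)β}`
for all `t ≥ 1`, for some constant `C > 0`. -/
theorem stmt_6 (α₀ α c β : ℝ) (d : ℕ) (lam : ℕ → ℝ) (B : ℝ → ℝ)
    (hα₀ : 1 < α₀) (hd : 1 ≤ d) (hα : α ∈ Set.Ioc (0:ℝ) 1) (hc : 0 < c) (hβ : 0 < β)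
    (hlam : ∀ k : ℕ, 1 ≤ k → α₀⁻¹ * (k : ℝ) ^ (2 / (d : ℝ)) ≤ lam k)
    (hB : ∀ r : ℝ, 0 ≤ r → c * r ^ α ≤ B r) :
    ∃ C : ℝ, 0 < C ∧ ∀ t : ℝ, 1 ≤ t →
      (∑' k : ℕ, ((k : ℝ) + 1) ^ (((d : ℝ) + 1) / (d : ℝ)) / B (lam (k + 1)) *
          Real.exp (-(α₀⁻¹ * ((k : ℝ) + 1) ^ (2 / (d : ℝ)) * t ^ (-β))))
        ≤ C * t ^ (((2 * (d : ℝ) - 2 * α + 1) / 2) * β) := by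
  obtain ⟨hα0, hα1⟩ := hα
  have ha : (0:ℝ) < α₀⁻¹ := inv_pos.2 (by linarith)
  have hdr : (1:ℝ) ≤ (d:ℝ) := by exact_mod_cast hd
  have hd0 : (0:ℝ) < (d:ℝ) := by linarith
  have hdne : (d:ℝ) ≠ 0 := ne_of_gt hd0
  set s : ℝ := ((d:ℝ) + 1 - 2*α)/2 with hs_def
  have hs : 0 ≤ s := by rw [hs_def]; linarith
  obtain ⟨K1, hK1, hK1b⟩ := lem_poly_exp s hs
  obtain ⟨K2, hK2, hK2b⟩ := lem_gauss_sum (α₀⁻¹/2) (by linarith) d hd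
  set A : ℝ := (c * (α₀⁻¹) ^ α)⁻¹ with hA_def
  have hA : 0 < A := by
    rw [hA_def]
    have := Real.rpow_pos_of_pos ha α
    positivity
  set D : ℝ := A * (2*α₀) ^ s * K1 with hD_def
  have hα₀0 : (0:ℝ) < α₀ := by linarith
  have hD : 0 < D := by
    rw [hD_def]
    have := Real.rpow_pos_of_pos (show (0:ℝ) < 2*α₀ by linarith) s
    positivity
  refine ⟨D * K2, by positivity, fun t ht => ?_⟩
  have ht0 : (0:ℝ) < t := by linarith
  set u : ℝ := t ^ (-β) with hu_def
  have hu : 0 < u := Real.rpow_pos_of_pos ht0 _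
  have hu1 : u ≤ 1 := Real.rpow_le_one_of_one_le_of_nonpos ht (by linarith)
  obtain ⟨hgsummable, hgbound⟩ := hK2b u hu hu1
  have hus : 0 < u ^ (-s) := Real.rpow_pos_of_pos hu _
  set f : ℕ → ℝ := fun k => ((k : ℝ) + 1) ^ (((d : ℝ) + 1) / (d : ℝ)) / B (lam (k + 1)) *
      Real.exp (-(α₀⁻¹ * ((k : ℝ) + 1) ^ (2 / (d : ℝ)) * u)) with hf_def
  set g : ℕ → ℝ := fun k => D * u ^ (-s) *
      Real.exp (-(α₀⁻¹/2 * ((k:ℝ)+1) ^ (2/(d:ℝ)) * u)) with hg_def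
  have hkey : ∀ k : ℕ, 0 ≤ f k ∧ f k ≤ g k := by
    intro k
    have hk1 : (0:ℝ) < (k:ℝ) + 1 := by positivity
    set w : ℝ := ((k:ℝ)+1) ^ (2/(d:ℝ)) with hw_def
    have hw : 0 < w := Real.rpow_pos_of_pos hk1 _
    have hlamk : α₀⁻¹ * w ≤ lam (k+1) := by
      have h := hlam (k+1) (by omega)
      push_cast at h
      rw [hw_def]
      exact h
    have haw : 0 < α₀⁻¹ * w := by positivity
    have hden : 0 < c * (α₀⁻¹ * w) ^ α := by
      have := Real.rpow_pos_of_pos haw α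
      positivity
    have hBk : c * (α₀⁻¹ * w) ^ α ≤ B (lam (k+1)) := by
      calc c * (α₀⁻¹ * w) ^ α ≤ c * (lam (k+1)) ^ α :=
            mul_le_mul_of_nonneg_left (Real.rpow_le_rpow haw.le hlamk hα0.le) hc.le
        _ ≤ B (lam (k+1)) := hB _ (le_trans haw.le hlamk)
    have hBpos : 0 < B (lam (k+1)) := lt_of_lt_of_le hden hBk
    have hP : (0:ℝ) ≤ ((k : ℝ) + 1) ^ (((d : ℝ) + 1) / (d : ℝ)) := by positivity
    have hE : (0:ℝ) < Real.exp (-(α₀⁻¹ * w * u)) := Real.exp_pos _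
    constructor
    · simp only [hf_def]
      positivity
    set y : ℝ := α₀⁻¹/2 * w * u with hy_def
    have hy : 0 ≤ y := by positivity
    have hyK1 : y ^ s * Real.exp (-y) ≤ K1 := hK1b y hy
    have hexp2 : Real.exp (-(α₀⁻¹ * w * u)) = Real.exp (-y) * Real.exp (-y) := by
      rw [← Real.exp_add, hy_def]
      congr 1
      ring
    have e1 : ((k : ℝ) + 1) ^ (((d : ℝ) + 1) / (d : ℝ)) = w ^ (s + α) := by
      rw [hw_def, ← Real.rpow_mul hk1.le]
      congr 1
      rw [hs_def]
      field_simp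
      ring
    have e2 : w ^ (s + α) = w ^ s * w ^ α := Real.rpow_add hw s α
    have e3 : w ^ s = (2*α₀/u) ^ s * y ^ s := by
      rw [← Real.mul_rpow (by positivity) hy]
      congr 1
      rw [hy_def]
      field_simp
    have e4 : (2*α₀/u) ^ s = (2*α₀) ^ s * u ^ (-s) := by
      rw [Real.div_rpow (by linarith) hu.le, Real.rpow_neg hu.le, div_eq_mul_inv]
    have step1 : f k ≤ ((k : ℝ) + 1) ^ (((d : ℝ) + 1) / (d : ℝ)) / (c * (α₀⁻¹ * w) ^ α)
        * Real.exp (-(α₀⁻¹ * w * u)) := by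
      simp only [hf_def]
      rw [← hw_def]
      exact mul_le_mul_of_nonneg_right (div_le_div_of_nonneg_left hP hden hBk) hE.le
    have hwα : 0 < w ^ α := Real.rpow_pos_of_pos hw α
    have hαiα : 0 < (α₀⁻¹:ℝ) ^ α := Real.rpow_pos_of_pos ha α
    have step2 : ((k : ℝ) + 1) ^ (((d : ℝ) + 1) / (d : ℝ)) / (c * (α₀⁻¹ * w) ^ α)
        * Real.exp (-(α₀⁻¹ * w * u))
        = A * ((2*α₀) ^ s * u ^ (-s)) * (y ^ s * Real.exp (-y)) * Real.exp (-y) := by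
      rw [e1, e2, e3, e4, hexp2, Real.mul_rpow ha.le hw.le, hA_def]
      field_simp
    have step3 : A * ((2*α₀) ^ s * u ^ (-s)) * (y ^ s * Real.exp (-y)) * Real.exp (-y)
        ≤ A * ((2*α₀) ^ s * u ^ (-s)) * K1 * Real.exp (-y) := by
      have h2α₀s : 0 < (2*α₀) ^ s := Real.rpow_pos_of_pos (by linarith) s
      refine mul_le_mul_of_nonneg_right (mul_le_mul_of_nonneg_left hyK1 (by positivity)) ?_
      exact (Real.exp_pos _).le
    have step4 : A * ((2*α₀) ^ s * u ^ (-s)) * K1 * Real.exp (-y) = g k := by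
      simp only [hg_def]
      rw [hD_def, hy_def, hw_def]
      ring
    calc f k ≤ _ := step1
      _ = _ := step2
      _ ≤ _ := step3
      _ = g k := step4
  have hgsum : Summable g := by
    rw [hg_def]
    exact hgsummable.mul_left _
  have hfsum : Summable f :=
    Summable.of_nonneg_of_le (fun k => (hkey k).1) (fun k => (hkey k).2) hgsum
  have htsum : ∑' k, f k ≤ ∑' k, g k := Summable.tsum_le_tsum (fun k => (hkey k).2) hfsum hgsum
  have hgtsum : ∑' k, g k
      = D * u ^ (-s) * ∑' k : ℕ, Real.exp (-(α₀⁻¹/2 * ((k:ℝ)+1) ^ (2/(d:ℝ)) * u)) := by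
    rw [hg_def]
    exact tsum_mul_left
  have hfinal : ∑' k, g k ≤ D * K2 * (u ^ (-s) * u ^ (-((d:ℝ)/2))) := by
    rw [hgtsum]
    calc D * u ^ (-s) * ∑' k : ℕ, Real.exp (-(α₀⁻¹/2 * ((k:ℝ)+1) ^ (2/(d:ℝ)) * u))
        ≤ D * u ^ (-s) * (K2 * u ^ (-((d:ℝ)/2))) :=
          mul_le_mul_of_nonneg_left hgbound (by positivity)
      _ = D * K2 * (u ^ (-s) * u ^ (-((d:ℝ)/2))) := by ring
  have hpow : u ^ (-s) * u ^ (-((d:ℝ)/2)) = t ^ (((2 * (d : ℝ) - 2 * α + 1) / 2) * β) := by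
    rw [← Real.rpow_add hu, hu_def, ← Real.rpow_mul ht0.le]
    congr 1
    rw [hs_def]
    ring
  rw [hpow] at hfinal
  exact htsum.trans hfinal
end
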